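/- arXiv:0705.4314 — 2 statements merged into one kernel-verified Lean document; each statement's English description precedes it below -/
import Mathlib

section
/- Let c, l be nonnegative integers with c + l ≤ n, and let u_1, ..., u_{c+l}, v_1, ..., v_c be vectors in ℝ^{2n} such that u_i ⊙ v_i = 1 for all i ≤ c and all other pairwise symplectic products among them vanish. Define augmented vectors in ℝ^{2(n+c)} (with n + c modes) as follows: for u = (p|x) ∈ ℝ^{2n} and a, b ∈ ℝ^c, let aug(u; a, b) = (p, a | x, b) ∈ ℝ^{2(n+c)}. Set ũ_i = aug(u_i; −f_i, 0) for i ≤ c (where f_i is the i-th standard basis vector of ℝ^c), ũ_i = aug(u_i; 0, 0) for c < i ≤ c + l, and ṽ_j = aug(v_j; 0, f_j) for j ≤ c. Then all pairwise symplectic products (in ℝ^{2(n+c)}) among the vectors ũ_1, ..., ũ_{c+l}, ṽ_1, ..., ṽ_c vanish; that is, the augmented set spans an isotropic subspace of ℝ^{2(n+c)}. -/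
/-! On the augmented vectors the symplectic product splits as the product in `ℝ^{2n}` plus the
product of the Bob parts. The Bob parts of the `ũ`'s are pure momenta and those of the `ṽ`'s
pure positions, so that term vanishes between two `ũ`'s or two `ṽ`'s; between `ũ_i` and `ṽ_j`
it is `-δ_ij`, which cancels the hyperbolic pairing `u_i ⊙ v_j = δ_ij`.
Isotropy of the generating set passes to its span by bilinearity. -/

open Matrix BigOperators

noncomputable section

/-- The symplectic product on `ℝ^{2N}` for `N` modes, where a vector `u = (p|x)`
has momentum coordinates `u (Sum.inl i) = p_i` and position coordinates
`u (Sum.inr i) = x_i`: `u ⊙ v = p·x' − x·p'`. -/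
def symp {N : ℕ} (u v : Fin N ⊕ Fin N → ℝ) : ℝ :=
  ∑ i : Fin N, (u (Sum.inl i) * v (Sum.inr i) - u (Sum.inr i) * v (Sum.inl i))

/-- Augment a vector `u = (p|x) ∈ ℝ^{2n}` by `c` extra modes (Bob's modes):
`aug u a b = (p, a | x, b) ∈ ℝ^{2(n+c)}`. -/
def aug {n c : ℕ} (u : Fin n ⊕ Fin n → ℝ) (a b : Fin c → ℝ) :
    Fin (n + c) ⊕ Fin (n + c) → ℝ :=
  Sum.elim (Fin.append (fun j : Fin n => u (Sum.inl j)) a)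
           (Fin.append (fun j : Fin n => u (Sum.inr j)) b)

/-- The augmented vector `ũ_i = aug(u_i; −f_i, 0)` for `i ≤ c` and
`ũ_i = aug(u_i; 0, 0)` for `c < i ≤ c + l` (a single formula covers both cases
since the entry `−f_i` exists only when `i < c`). -/
def utAug {n c l : ℕ} (u : Fin (c + l) → (Fin n ⊕ Fin n → ℝ)) (i : Fin (c + l)) :
    Fin (n + c) ⊕ Fin (n + c) → ℝ :=
  aug (u i) (fun k : Fin c => if (k : ℕ) = (i : ℕ) then -1 else 0) 0

/-- The augmented vector `ṽ_j = aug(v_j; 0, f_j)`. -/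
def vtAug {n c : ℕ} (v : Fin c → (Fin n ⊕ Fin n → ℝ)) (j : Fin c) :
    Fin (n + c) ⊕ Fin (n + c) → ℝ :=
  aug (v j) 0 (fun k : Fin c => if k = j then 1 else 0)

theorem symp_swap {N : ℕ} (u v : Fin N ⊕ Fin N → ℝ) : symp v u = -symp u v := by
  simp only [symp, ← Finset.sum_neg_distrib]
  exact Finset.sum_congr rfl fun _ _ => by ring

def sympForm (N : ℕ) : LinearMap.BilinForm ℝ (Fin N ⊕ Fin N → ℝ) :=
  LinearMap.mk₂ ℝ symp
    (fun _ _ _ => by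
      simp only [symp, Pi.add_apply, ← Finset.sum_add_distrib]
      exact Finset.sum_congr rfl fun _ _ => by ring)
    (fun _ _ _ => by
      simp only [symp, Pi.smul_apply, smul_eq_mul, Finset.mul_sum]
      exact Finset.sum_congr rfl fun _ _ => by ring)
    (fun _ _ _ => by
      simp only [symp, Pi.add_apply, ← Finset.sum_add_distrib]
      exact Finset.sum_congr rfl fun _ _ => by ring)
    (fun _ _ _ => by
      simp only [symp, Pi.smul_apply, smul_eq_mul, Finset.mul_sum]
      exact Finset.sum_congr rfl fun _ _ => by ring)

theorem symp_eq_zero_of_mem_span {N : ℕ} {s : Set (Fin N ⊕ Fin N → ℝ)}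
    (hs : ∀ x ∈ s, ∀ y ∈ s, symp x y = 0) :
    ∀ w ∈ Submodule.span ℝ s, ∀ z ∈ Submodule.span ℝ s, symp w z = 0 := fun w hw z hz =>
  (Submodule.mem_bot ℝ).1 <|
    LinearMap.BilinMap.apply_apply_mem_of_mem_span ⊥ s s (sympForm N)
      (fun x hx y hy => (Submodule.mem_bot ℝ).2 (hs x hx y hy)) w z hw hz

theorem symp_aug {n c : ℕ} (u u' : Fin n ⊕ Fin n → ℝ) (a b a' b' : Fin c → ℝ) :
    symp (aug u a b) (aug u' a' b') =
      symp u u' + ∑ k : Fin c, (a k * b' k - b k * a' k) := by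
  simp only [symp, aug, Sum.elim_inl, Sum.elim_inr, Finset.sum_sub_distrib, Fin.sum_univ_add,
    Fin.append_left, Fin.append_right]
  ring

theorem symp_utAug_utAug {n c l : ℕ} (u : Fin (c + l) → (Fin n ⊕ Fin n → ℝ))
    (i j : Fin (c + l)) : symp (utAug u i) (utAug u j) = symp (u i) (u j) := by
  simp [utAug, symp_aug]

theorem symp_vtAug_vtAug {n c : ℕ} (v : Fin c → (Fin n ⊕ Fin n → ℝ)) (i j : Fin c) :
    symp (vtAug v i) (vtAug v j) = symp (v i) (v j) := by
  simp [vtAug, symp_aug]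

theorem symp_utAug_vtAug {n c l : ℕ} (u : Fin (c + l) → (Fin n ⊕ Fin n → ℝ))
    (v : Fin c → (Fin n ⊕ Fin n → ℝ)) (i : Fin (c + l)) (j : Fin c) :
    symp (utAug u i) (vtAug v j) = symp (u i) (v j) - if (i : ℕ) = j then 1 else 0 := by
  simp only [utAug, vtAug, symp_aug]
  split_ifs <;> simp [*, eq_comm, sub_eq_add_neg]

theorem augmented_vectors_isotropic_general (n c l : ℕ)
    (u : Fin (c + l) → (Fin n ⊕ Fin n → ℝ)) (v : Fin c → (Fin n ⊕ Fin n → ℝ))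
    (huu : ∀ i j, symp (u i) (u j) = 0)
    (hvv : ∀ i j, symp (v i) (v j) = 0)
    (huv : ∀ (i : Fin (c + l)) (j : Fin c),
      symp (u i) (v j) = if (i : ℕ) = (j : ℕ) then 1 else 0) :
    (∀ i j, symp (utAug u i) (utAug u j) = 0) ∧
    (∀ i j, symp (vtAug v i) (vtAug v j) = 0) ∧
    (∀ i j, symp (utAug u i) (vtAug v j) = 0) ∧
    (∀ w ∈ Submodule.span ℝ (Set.range (utAug u) ∪ Set.range (vtAug v)),
      ∀ z ∈ Submodule.span ℝ (Set.range (utAug u) ∪ Set.range (vtAug v)),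
        symp w z = 0) := by
  have hu : ∀ i j, symp (utAug u i) (utAug u j) = 0 := fun i j => by
    rw [symp_utAug_utAug, huu]
  have hv : ∀ i j, symp (vtAug v i) (vtAug v j) = 0 := fun i j => by
    rw [symp_vtAug_vtAug, hvv]
  have huv' : ∀ i j, symp (utAug u i) (vtAug v j) = 0 := fun i j => by
    rw [symp_utAug_vtAug, huv, sub_self]
  refine ⟨hu, hv, huv', symp_eq_zero_of_mem_span ?_⟩
  rintro _ (⟨i, rfl⟩ | ⟨i, rfl⟩) _ (⟨j, rfl⟩ | ⟨j, rfl⟩)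
  · exact hu i j
  · exact huv' i j
  · rw [symp_swap, huv', neg_zero]
  · exact hv i j

/-- Augmenting the hyperbolic pairs with `c` extra (Bob's) modes turns the set
into one whose pairwise symplectic products in `ℝ^{2(n+c)}` all vanish, i.e. the
augmented set spans an isotropic subspace of `ℝ^{2(n+c)}`. -/
theorem augmented_vectors_isotropic (n c l : ℕ) (hcl : c + l ≤ n)
    (u : Fin (c + l) → (Fin n ⊕ Fin n → ℝ)) (v : Fin c → (Fin n ⊕ Fin n → ℝ))
    (huu : ∀ i j, symp (u i) (u j) = 0)
    (hvv : ∀ i j, symp (v i) (v j) = 0)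
    (huv : ∀ (i : Fin (c + l)) (j : Fin c),
      symp (u i) (v j) = if (i : ℕ) = (j : ℕ) then 1 else 0) :
    (∀ i j, symp (utAug u i) (utAug u j) = 0) ∧
    (∀ i j, symp (vtAug v i) (vtAug v j) = 0) ∧
    (∀ i j, symp (utAug u i) (vtAug v j) = 0) ∧
    (∀ w ∈ Submodule.span ℝ (Set.range (utAug u) ∪ Set.range (vtAug v)),
      ∀ z ∈ Submodule.span ℝ (Set.range (utAug u) ∪ Set.range (vtAug v)),
        symp w z = 0) :=
  augmented_vectors_isotropic_general n c l u v huu hvv huv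
end
end

section
/- Define four syndrome maps s_1, s_2, s_3, s_4 : ℝ × ℝ → ℝ^4 by s_1(p,x) = (x, √(1/2)(p − x), x, √(1/2)p − √2 x), s_2(p,x) = (x, √2 x − √(1/2)p, p, √(1/2)x − √2 p), s_3(p,x) = (0, −√2 x + √(1/2)p, x, −√(9/2) x), s_4(p,x) = (x, √(1/2)x, 0, √(1/2)(p + x)). Then these syndromes are unique for nonzero errors: for all i, j ∈ {1,2,3,4} and all p, x, p', x' ∈ ℝ with p ≠ 0, x ≠ 0, p' ≠ 0, x' ≠ 0, if s_i(p,x) = s_j(p',x') then i = j, p = p', and x = x'. In particular, the error syndrome uniquely identifies which of the four modes suffered the single-mode error D(u) with u = (p|x) and the values of p and x. -/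
/-! Each syndrome map is linear and injective: `x` is read off one coordinate and then `p` off
another. For nonzero `p` and `x` the mode is read off the zero pattern: only mode 3 (index
`2 : Fin 4`) has a vanishing first coordinate and only mode 4 (index `3`) a vanishing third one.
Equal syndromes from modes 1 and 2 would, using √2 = 2√(1/2), force √(1/2)·x = 0. -/

open Matrix BigOperators

noncomputable section

/-- Syndrome for a single-mode error `(p|x)` on mode 1:
`s₁(p,x) = (x, √(1/2)(p − x), x, √(1/2)p − √2 x)`. -/
def s₁ (p x : ℝ) : Fin 4 → ℝ :=
  ![x, Real.sqrt (1/2) * (p - x), x, Real.sqrt (1/2) * p - Real.sqrt 2 * x]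

/-- Syndrome for a single-mode error `(p|x)` on mode 2:
`s₂(p,x) = (x, √2 x − √(1/2)p, p, √(1/2)x − √2 p)`. -/
def s₂ (p x : ℝ) : Fin 4 → ℝ :=
  ![x, Real.sqrt 2 * x - Real.sqrt (1/2) * p, p,
    Real.sqrt (1/2) * x - Real.sqrt 2 * p]

/-- Syndrome for a single-mode error `(p|x)` on mode 3:
`s₃(p,x) = (0, −√2 x + √(1/2)p, x, −√(9/2) x)`. -/
def s₃ (p x : ℝ) : Fin 4 → ℝ :=
  ![0, -(Real.sqrt 2) * x + Real.sqrt (1/2) * p, x, -(Real.sqrt (9/2)) * x]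

/-- Syndrome for a single-mode error `(p|x)` on mode 4:
`s₄(p,x) = (x, √(1/2)x, 0, √(1/2)(p + x))`. -/
def s₄ (p x : ℝ) : Fin 4 → ℝ :=
  ![x, Real.sqrt (1/2) * x, 0, Real.sqrt (1/2) * (p + x)]

/-- The four syndrome maps, indexed by the mode suffering the error. -/
def syndrome : Fin 4 → ℝ → ℝ → Fin 4 → ℝ := ![s₁, s₂, s₃, s₄]

theorem Real.sqrt_sq_mul {c : ℝ} (hc : 0 ≤ c) (y : ℝ) : √(c ^ 2 * y) = c * √y := by
  rw [Real.sqrt_mul (sq_nonneg c), Real.sqrt_sq hc]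

theorem sqrt_two_eq_two_mul_sqrt_half : √2 = 2 * √(1 / 2) := by
  rw [← Real.sqrt_sq_mul zero_le_two]; norm_num

theorem s₁_injective2 : Function.Injective2 s₁ := by
  intro p p' x x' h
  have h0 := congrFun h 0
  have h1 := congrFun h 1
  simp only [s₁, cons_val_zero, cons_val_one] at h0 h1
  have : p - x = p' - x' := mul_left_cancel₀ (by positivity) h1
  exact ⟨by linarith, h0⟩

theorem s₂_injective2 : Function.Injective2 s₂ := fun _ _ _ _ h =>
  ⟨congrFun h 2, congrFun h 0⟩

theorem s₃_injective2 : Function.Injective2 s₃ := by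
  intro p p' x x' h
  have h1 := congrFun h 1
  have h2 : x = x' := congrFun h 2
  subst h2
  simp only [s₃, cons_val_one] at h1
  exact ⟨mul_left_cancel₀ (by positivity) (add_left_cancel h1), rfl⟩

theorem s₄_injective2 : Function.Injective2 s₄ := by
  intro p p' x x' h
  have h0 : x = x' := congrFun h 0
  have h3 := congrFun h 3
  subst h0
  simp only [s₄, cons_val_three] at h3
  exact ⟨add_right_cancel (mul_left_cancel₀ (by positivity) h3), rfl⟩

theorem syndrome_injective2 (i : Fin 4) : Function.Injective2 (syndrome i) := by
  fin_cases i
  exacts [s₁_injective2, s₂_injective2, s₃_injective2, s₄_injective2]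

theorem syndrome_apply_zero_eq_zero_iff {i : Fin 4} {p x : ℝ} (hx : x ≠ 0) :
    syndrome i p x 0 = 0 ↔ i = 2 := by
  fin_cases i <;> simp [syndrome, s₁, s₂, s₃, s₄, hx]

theorem syndrome_apply_two_eq_zero_iff {i : Fin 4} {p x : ℝ} (hp : p ≠ 0) (hx : x ≠ 0) :
    syndrome i p x 2 = 0 ↔ i = 3 := by
  fin_cases i <;> simp [syndrome, s₁, s₂, s₃, s₄, hp, hx]

theorem s₁_ne_s₂ {p x p' x' : ℝ} (hx : x ≠ 0) : s₁ p x ≠ s₂ p' x' := by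
  intro h
  have h0 : x = x' := congrFun h 0
  have h2 : x = p' := congrFun h 2
  have h1 := congrFun h 1
  have h3 := congrFun h 3
  subst h0 h2
  simp only [s₁, s₂, sqrt_two_eq_two_mul_sqrt_half, cons_val_one, cons_val_three, cons_val_zero,
    head_cons, tail_cons] at h1 h3
  have : √(1 / 2) * x = 0 := by linear_combination h3 - h1
  exact mul_ne_zero (by positivity) hx this

/-- The error syndromes of the example code are unique for any nonzero `p` and
`x`: the syndrome uniquely identifies on which mode the single-mode error
`D(u)`, `u = (p|x)`, occurred, together with the values of `p` and `x`. -/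
theorem example_code_syndromes_unique :
    ∀ (i j : Fin 4) (p x p' x' : ℝ), p ≠ 0 → x ≠ 0 → p' ≠ 0 → x' ≠ 0 →
      syndrome i p x = syndrome j p' x' → i = j ∧ p = p' ∧ x = x' := by
  intro i j p x p' x' hp hx hp' hx' h
  have mode_three : i = 2 ↔ j = 2 := by
    rw [← syndrome_apply_zero_eq_zero_iff (p := p) hx,
      ← syndrome_apply_zero_eq_zero_iff (p := p') hx', h]
  have mode_four : i = 3 ↔ j = 3 := by
    rw [← syndrome_apply_two_eq_zero_iff hp hx, ← syndrome_apply_two_eq_zero_iff hp' hx', h]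
  have hij : i = j := by
    fin_cases i <;> fin_cases j <;>
      first
      | rfl
      | exact absurd h (s₁_ne_s₂ hx)
      | exact absurd h.symm (s₁_ne_s₂ hx')
      | simp at mode_three mode_four
  subst hij
  exact ⟨rfl, syndrome_injective2 i h⟩
end
end
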